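/- (Nonlinear Hardy inequality) Let m ≥ 0 be an integer and M > 0. There exist R₀ > 1 and constants c, C > 0, all depending only on m and M, such that the following holds for every R ≥ R₀: for every measurable ε : (0,∞) → ℂ with ‖ε‖_{L²} ≤ M and every smooth f : (0,∞) → ℂ supported in [R,∞) with 2π∫₀^∞ (|∂_r f|² + |f|²/r²) r dr < ∞, one has c · 2π∫_R^∞ (|∂_r f|² + |f|²/r²) r dr ≤ 2π∫_R^∞ |∂_r f − ((m + A_θ[Q](r) + A_θ[ε](r))/r) f|² r dr ≤ C · 2π∫_R^∞ (|∂_r f|² + |f|²/r²) r dr. -/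

import Mathlib

open MeasureTheory Set

/-- `A_θ[ψ](r) = -(1/2)∫₀^r |ψ(r')|² r' dr'`. -/
noncomputable def Atheta (ψ : ℝ → ℂ) (r : ℝ) : ℝ :=
  -(1/2) * ∫ t in (0:ℝ)..r, ‖ψ t‖ ^ 2 * t

/-- The Jackiw–Pi vortex `Q(r) = √8 (m+1) r^m / (1 + r^{2m+2})`. -/
noncomputable def Qp (m : ℤ) (r : ℝ) : ℝ :=
  Real.sqrt 8 * ((m : ℝ) + 1) * r ^ m / (1 + r ^ (2 * m + 2))

/-- The `L²` norm with respect to the measure `2π r dr` on `(0,∞)`. -/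
noncomputable def L2w (g : ℝ → ℂ) : ℝ :=
  Real.sqrt (2 * Real.pi * ∫ r in Set.Ioi (0:ℝ), ‖g r‖ ^ 2 * r)

namespace NLHardy
open intervalIntegral

lemma denom_pos (k : ℕ) (t : ℝ) : 0 < 1 + t ^ (2*k+2) := by
  have h : (0:ℝ) ≤ t ^ (2*k+2) := by
    have : t ^ (2*k+2) = (t^(k+1))^2 := by ring
    rw [this]; positivity
  linarith

lemma Qp_sq_mul (k : ℕ) (t : ℝ) :
    ‖((Qp (k:ℤ) t : ℝ) : ℂ)‖ ^ 2 * t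
      = 8 * ((k:ℝ)+1)^2 * t ^ (2*k+1) / (1 + t ^ (2*k+2))^2 := by
  have h2 : (2*(k:ℤ)+2 : ℤ) = ((2*k+2 : ℕ) : ℤ) := by push_cast; ring
  have hden := denom_pos k t
  rw [Complex.norm_real, Qp, h2, zpow_natCast, zpow_natCast]
  rw [Real.norm_eq_abs, sq_abs]
  have h8 : (Real.sqrt 8)^2 = 8 := Real.sq_sqrt (by norm_num)
  rw [div_pow, mul_pow, mul_pow, h8, div_mul_eq_mul_div]
  push_cast
  congr 1
  rw [← pow_mul]
  ring

lemma hasDerivAt_F (k : ℕ) (t : ℝ) :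
    HasDerivAt (fun s : ℝ => -(4*((k:ℝ)+1)) / (1 + s ^ (2*k+2)))
      (8 * ((k:ℝ)+1)^2 * t ^ (2*k+1) / (1 + t ^ (2*k+2))^2) t := by
  have hden := denom_pos k t
  have h1 : HasDerivAt (fun s : ℝ => 1 + s ^ (2*k+2)) ((2*k+2) * t ^ (2*k+1)) t := by
    simpa using (hasDerivAt_pow (2*k+2) t).const_add 1
  have h2 := ((h1.inv (ne_of_gt hden)).const_mul (-(4*((k:ℝ)+1))))
  have heq : (fun s : ℝ => -(4*((k:ℝ)+1)) / (1 + s ^ (2*k+2)))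
      = fun s : ℝ => -(4*((k:ℝ)+1)) * (1 + s ^ (2*k+2))⁻¹ := by
    funext s; rw [div_eq_mul_inv]
  rw [heq]
  refine h2.congr_deriv ?_
  ring

lemma integrand_cont (k : ℕ) :
    Continuous (fun t : ℝ => 8 * ((k:ℝ)+1)^2 * t ^ (2*k+1) / (1 + t ^ (2*k+2))^2) := by
  apply Continuous.div (by continuity) (by continuity)
  intro t
  have := denom_pos k t
  positivity

lemma AthetaQ_eq (k : ℕ) (r : ℝ) :
    Atheta (fun t => ((Qp (k:ℤ) t : ℝ) : ℂ)) r
      = 2*((k:ℝ)+1)/(1 + r ^ (2*k+2)) - 2*((k:ℝ)+1) := by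
  have hint : ∀ x ∈ uIcc (0:ℝ) r,
      HasDerivAt (fun s : ℝ => -(4*((k:ℝ)+1)) / (1 + s ^ (2*k+2)))
        (8 * ((k:ℝ)+1)^2 * x ^ (2*k+1) / (1 + x ^ (2*k+2))^2) x :=
    fun x _ => hasDerivAt_F k x
  have hii : IntervalIntegrable
      (fun t : ℝ => 8 * ((k:ℝ)+1)^2 * t ^ (2*k+1) / (1 + t ^ (2*k+2))^2) volume 0 r :=
    (integrand_cont k).intervalIntegrable 0 r
  have hFTC := intervalIntegral.integral_eq_sub_of_hasDerivAt hint hii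
  have hcong : (∫ t in (0:ℝ)..r, ‖((Qp (k:ℤ) t : ℝ) : ℂ)‖ ^ 2 * t)
      = ∫ t in (0:ℝ)..r, 8 * ((k:ℝ)+1)^2 * t ^ (2*k+1) / (1 + t ^ (2*k+2))^2 := by
    apply intervalIntegral.integral_congr
    intro t _
    exact Qp_sq_mul k t
  rw [Atheta, hcong, hFTC]
  have h0 : (0:ℝ) ^ (2*k+2) = 0 := zero_pow (by omega)
  rw [h0]
  have := denom_pos k r
  field_simp
  ring

section eps
variable (ε : ℝ → ℂ) (hε : IntegrableOn (fun r => ‖ε r‖ ^ 2 * r) (Set.Ioi (0:ℝ)))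

noncomputable def phiE (ε : ℝ → ℂ) (r : ℝ) : ℝ := ∫ t in Ioc (0:ℝ) r, ‖ε t‖ ^ 2 * t

lemma integrand_nonneg_on (s : Set ℝ) (hs : MeasurableSet s) (h : s ⊆ Ioi 0) :
    0 ≤ᶠ[ae (volume.restrict s)] (fun t : ℝ => ‖ε t‖ ^ 2 * t) := by
  filter_upwards [MeasureTheory.ae_restrict_mem hs] with t ht
  have := h ht
  have : (0:ℝ) < t := this
  positivity

include hε in
lemma phiE_mono : Monotone (phiE ε) := by
  intro r1 r2 h
  apply MeasureTheory.setIntegral_mono_set (hε.mono_set Ioc_subset_Ioi_self)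
    (integrand_nonneg_on ε _ measurableSet_Ioc Ioc_subset_Ioi_self)
    (HasSubset.Subset.eventuallyLE (Ioc_subset_Ioc_right h))

include hε in
lemma phiE_le (r : ℝ) : phiE ε r ≤ ∫ t in Ioi (0:ℝ), ‖ε t‖ ^ 2 * t := by
  apply MeasureTheory.setIntegral_mono_set hε
    (integrand_nonneg_on ε _ measurableSet_Ioi (subset_refl _))
    (HasSubset.Subset.eventuallyLE Ioc_subset_Ioi_self)

lemma phiE_nonneg (r : ℝ) : 0 ≤ phiE ε r := by
  apply MeasureTheory.setIntegral_nonneg measurableSet_Ioc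
  intro t ht
  have : (0:ℝ) < t := ht.1
  positivity

lemma Atheta_eps_eq (r : ℝ) (hr : 0 ≤ r) : Atheta ε r = -(1/2) * phiE ε r := by
  rw [Atheta, intervalIntegral.integral_of_le hr, phiE]

include hε in
lemma phiE_measurable : Measurable (phiE ε) := (phiE_mono ε hε).measurable

end eps

lemma arith3 (u v e1 e2 aa r : ℝ) (hr : 0 < r) (haa : aa ≤ -(3/2)) :
    2*(u*(e1 + aa/r*u) + v*(e2 + aa/r*v))
      ≤ -(3/2) * ((u*u+v*v)/r^2*r) + (2/3) * ((e1*e1+e2*e2)*r) := by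
  have hrne : r ≠ 0 := ne_of_gt hr
  have hB : 0 ≤ -(3/2)*(u^2+v^2) + (2/3)*(e1^2+e2^2)*r^2 - 2*r*(u*e1+v*e2)
      - 2*aa*(u^2+v^2) := by
    nlinarith [sq_nonneg (3*u-2*r*e1), sq_nonneg (3*v-2*r*e2),
      mul_nonneg (by linarith : (0:ℝ) ≤ -2*aa-3) (add_nonneg (sq_nonneg u) (sq_nonneg v))]
  have hdiff : -(3/2) * ((u*u+v*v)/r^2*r) + (2/3) * ((e1*e1+e2*e2)*r)
      - 2*(u*(e1 + aa/r*u) + v*(e2 + aa/r*v))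
      = (-(3/2)*(u^2+v^2) + (2/3)*(e1^2+e2^2)*r^2 - 2*r*(u*e1+v*e2)
        - 2*aa*(u^2+v^2)) / r := by
    field_simp
    ring
  have h2 := div_nonneg hB hr.le
  rw [← hdiff] at h2
  linarith

lemma arith1 (x w s K : ℝ) (hs : 0 ≤ s) (hw : w^2 = K^2*s) :
    (x+w)^2 ≤ (2*(1+K^2))*(x^2+s) := by
  nlinarith [sq_nonneg (x-w), mul_nonneg (sq_nonneg K) (sq_nonneg x)]

lemma arith2 (x w s K : ℝ) (hs : 0 ≤ s) (hw : w^2 = K^2*s) :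
    (x+w)^2 ≤ 2*x^2 + (2*K^2)*s := by
  nlinarith [sq_nonneg (x-w)]

set_option maxHeartbeats 2000000 in
theorem main (k : ℕ) (M : ℝ) (hM : 0 < M) (R : ℝ) (hR : 2 ≤ R)
    (ε : ℝ → ℂ) (hεm : Measurable ε)
    (hε : IntegrableOn (fun r => ‖ε r‖ ^ 2 * r) (Set.Ioi (0:ℝ)))
    (hεL2 : Real.sqrt (2 * Real.pi * ∫ r in Set.Ioi (0:ℝ), ‖ε r‖ ^ 2 * r) ≤ M)
    (f : ℝ → ℂ) (hf : ContDiff ℝ (⊤ : ℕ∞) f) (hsupp : ∀ r : ℝ, r < R → f r = 0)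
    (hH : IntegrableOn (fun r => (‖deriv f r‖ ^ 2 + ‖f r‖ ^ 2 / r ^ 2) * r) (Set.Ioi (0:ℝ))) :
    (9/(22+8*((k:ℝ) + 2 + M^2/(4*Real.pi))^2)) *
        (∫ r in Set.Ioi R, (‖deriv f r‖ ^ 2 + ‖f r‖ ^ 2 / r ^ 2) * r)
      ≤ (∫ r in Set.Ioi R,
          ‖deriv f r - (((((k:ℤ) : ℝ) + Atheta (fun t => ((Qp (k:ℤ) t : ℝ) : ℂ)) r
              + Atheta ε r) / r : ℝ) : ℂ) * f r‖ ^ 2 * r) ∧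
    (∫ r in Set.Ioi R,
          ‖deriv f r - (((((k:ℤ) : ℝ) + Atheta (fun t => ((Qp (k:ℤ) t : ℝ) : ℂ)) r
              + Atheta ε r) / r : ℝ) : ℂ) * f r‖ ^ 2 * r)
      ≤ (2*(1+((k:ℝ) + 2 + M^2/(4*Real.pi))^2)) *
        (∫ r in Set.Ioi R, (‖deriv f r‖ ^ 2 + ‖f r‖ ^ 2 / r ^ 2) * r) := by
  have hπ : (0:ℝ) < Real.pi := Real.pi_pos
  set K : ℝ := (k:ℝ) + 2 + M^2/(4*Real.pi) with hKdef
  have hK0 : 0 < K := by positivity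
  have hK32 : (3:ℝ)/2 ≤ K := by
    have : (0:ℝ) ≤ (k:ℝ) := Nat.cast_nonneg k
    have : (0:ℝ) ≤ M^2/(4*Real.pi) := by positivity
    simp only [hKdef]; linarith [Nat.cast_nonneg (α := ℝ) k]
  -- the effective coefficient function
  set aF : ℝ → ℝ := fun r =>
    (k:ℝ) + (2*((k:ℝ)+1)/(1 + r ^ (2*k+2)) - 2*((k:ℝ)+1)) + (-(1/2) * phiE ε r) with haFdef
  -- ε-mass bound
  have hIε0 : 0 ≤ ∫ t in Ioi (0:ℝ), ‖ε t‖ ^ 2 * t := by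
    apply setIntegral_nonneg measurableSet_Ioi
    intro t ht
    have : (0:ℝ) < t := ht
    positivity
  have hIεle : ∫ t in Ioi (0:ℝ), ‖ε t‖ ^ 2 * t ≤ M^2/(2*Real.pi) := by
    have h0 : 0 ≤ 2 * Real.pi * ∫ t in Ioi (0:ℝ), ‖ε t‖ ^ 2 * t := by positivity
    have := Real.sq_sqrt h0
    have hsq : 2 * Real.pi * (∫ t in Ioi (0:ℝ), ‖ε t‖ ^ 2 * t) ≤ M^2 := by
      calc 2 * Real.pi * (∫ t in Ioi (0:ℝ), ‖ε t‖ ^ 2 * t)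
          = (Real.sqrt (2 * Real.pi * ∫ t in Ioi (0:ℝ), ‖ε t‖ ^ 2 * t))^2 := this.symm
        _ ≤ M^2 := by
            apply pow_le_pow_left₀ (Real.sqrt_nonneg _) hεL2
    rw [le_div_iff₀ (by positivity), mul_comm]
    exact hsq
  -- bounds on aF
  have haF_ub : ∀ r : ℝ, 2 ≤ r → aF r ≤ -(3/2) := by
    intro r hr2
    have hden := denom_pos k r
    have hrn : (4:ℝ) ≤ r ^ (2*k+2) := by
      calc (4:ℝ) = 2^2 := by norm_num
        _ ≤ 2^(2*k+2) := by
            apply pow_le_pow_right₀ (by norm_num) (by omega)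
        _ ≤ r^(2*k+2) := by
            apply pow_le_pow_left₀ (by norm_num) hr2
    have hfrac : 2*((k:ℝ)+1)/(1 + r ^ (2*k+2)) ≤ 2*((k:ℝ)+1)/5 := by
      apply div_le_div_of_nonneg_left (by positivity) (by norm_num) (by linarith)
    have hphi := phiE_nonneg ε r
    have hk0 : (0:ℝ) ≤ (k:ℝ) := Nat.cast_nonneg k
    simp only [haFdef]
    nlinarith
  have haF_lb : ∀ r : ℝ, -K ≤ aF r := by
    intro r
    have hden := denom_pos k r
    have hfrac : 0 ≤ 2*((k:ℝ)+1)/(1 + r ^ (2*k+2)) := by positivity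
    have hphi1 := phiE_le ε hε r
    have hphi2 : phiE ε r ≤ M^2/(2*Real.pi) := le_trans hphi1 hIεle
    simp only [haFdef, hKdef]
    have : M^2/(4*Real.pi) = (1/2) * (M^2/(2*Real.pi)) := by ring
    nlinarith
  have haF_abs : ∀ r : ℝ, 2 ≤ r → |aF r| ≤ K := by
    intro r hr2
    rw [abs_le]
    refine ⟨haF_lb r, ?_⟩
    have h1 := haF_ub r hr2
    clear_value aF K
    linarith
  -- bridge to the statement coefficient
  have haS : ∀ r ∈ Ioi R, (((k:ℤ):ℝ) + Atheta (fun t => ((Qp (k:ℤ) t : ℝ) : ℂ)) r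
      + Atheta ε r) = aF r := by
    intro r hr
    have hr0 : (0:ℝ) ≤ r := by
      have : (2:ℝ) < r := lt_of_le_of_lt hR hr
      linarith
    rw [AthetaQ_eq, Atheta_eps_eq ε r hr0, haFdef]
    push_cast
    ring
  -- continuity facts
  have hfc : Continuous f := hf.continuous
  have hf'c : Continuous (deriv f) := hf.continuous_deriv (by simp)
  have hfd : ∀ r : ℝ, HasDerivAt f (deriv f r) r :=
    fun r => ((hf.differentiable (by simp)) r).hasDerivAt
  have hfR0 : f R = 0 := by
    have hcl : IsClosed {x : ℝ | f x = 0} := isClosed_singleton.preimage hfc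
    have h1 : Iio R ⊆ {x : ℝ | f x = 0} := fun x hx => hsupp x hx
    have h2 : closure (Iio R) ⊆ {x : ℝ | f x = 0} := hcl.closure_subset_iff.mpr h1
    have h3 : R ∈ closure (Iio R) := by rw [closure_Iio]; exact self_mem_Iic
    exact h2 h3
  -- measurability of aF
  have hcontQ : Continuous fun r : ℝ =>
      (k:ℝ) + (2*((k:ℝ)+1)/(1 + r ^ (2*k+2)) - 2*((k:ℝ)+1)) := by
    apply Continuous.add continuous_const
    apply Continuous.sub _ continuous_const
    exact Continuous.div continuous_const (by continuity) (fun r => ne_of_gt (denom_pos k r))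
  have haFm : Measurable aF := by
    rw [haFdef]
    exact hcontQ.measurable.add ((phiE_measurable ε hε).const_mul (-(1/2)))
  clear_value aF K
  -- notation
  set Eint : ℝ → ℝ := fun r => ‖deriv f r - ((aF r / r : ℝ) : ℂ) * f r‖ ^ 2 * r with hEintdef
  set Dint : ℝ → ℝ := fun r => ‖deriv f r‖ ^ 2 * r with hDintdef
  set Xint : ℝ → ℝ := fun r => ‖f r‖ ^ 2 / r ^ 2 * r with hXintdef
  set Hint : ℝ → ℝ := fun r => (‖deriv f r‖ ^ 2 + ‖f r‖ ^ 2 / r ^ 2) * r with hHintdef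
  clear_value Eint Dint Xint Hint
  have hJeq : (∫ r in Ioi R,
        ‖deriv f r - (((((k:ℤ):ℝ) + Atheta (fun t => ((Qp (k:ℤ) t : ℝ) : ℂ)) r
            + Atheta ε r) / r : ℝ) : ℂ) * f r‖ ^ 2 * r)
      = ∫ r in Ioi R, Eint r := by
    apply setIntegral_congr_fun measurableSet_Ioi
    intro r hr
    simp only [hEintdef]
    rw [haS r hr]
  -- pointwise bounds
  have hEptw : ∀ r : ℝ, 2 ≤ r → Eint r ≤ (2*(1+K^2)) * Hint r := by
    intro r hr2
    have hr0 : (0:ℝ) < r := by linarith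
    have hnE : ‖deriv f r - ((aF r / r : ℝ) : ℂ) * f r‖
        ≤ ‖deriv f r‖ + K/r * ‖f r‖ := by
      refine le_trans (norm_sub_le _ _) ?_
      have h1 : ‖((aF r / r : ℝ) : ℂ) * f r‖ = |aF r / r| * ‖f r‖ := by
        rw [norm_mul, Complex.norm_real, Real.norm_eq_abs]
      rw [h1]
      have h2 : |aF r / r| ≤ K / r := by
        rw [abs_div, abs_of_pos hr0]
        gcongr
        exact haF_abs r hr2
      have := mul_le_mul_of_nonneg_right h2 (norm_nonneg (f r))
      linarith
    have hsq : ‖deriv f r - ((aF r / r : ℝ) : ℂ) * f r‖ ^ 2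
        ≤ (‖deriv f r‖ + K/r * ‖f r‖) ^ 2 :=
      pow_le_pow_left₀ (norm_nonneg _) hnE 2
    have e1 : (K/r * ‖f r‖)^2 = K^2 * (‖f r‖^2/r^2) := by
      rw [mul_pow, div_pow]; ring
    have hsq2 : (‖deriv f r‖ + K/r * ‖f r‖) ^ 2
        ≤ (2*(1+K^2)) * (‖deriv f r‖ ^ 2 + ‖f r‖ ^ 2 / r ^ 2) :=
      arith1 _ _ _ _ (by positivity) e1
    simp only [hEintdef, hHintdef]
    calc ‖deriv f r - ((aF r / r : ℝ) : ℂ) * f r‖ ^ 2 * r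
        ≤ ((2*(1+K^2)) * (‖deriv f r‖ ^ 2 + ‖f r‖ ^ 2 / r ^ 2)) * r := by
          apply mul_le_mul_of_nonneg_right (le_trans hsq hsq2) (le_of_lt hr0)
      _ = (2*(1+K^2)) * ((‖deriv f r‖ ^ 2 + ‖f r‖ ^ 2 / r ^ 2) * r) := by ring
  have hDptw : ∀ r : ℝ, 2 ≤ r → Dint r ≤ 2 * Eint r + (2*K^2) * Xint r := by
    intro r hr2
    have hr0 : (0:ℝ) < r := by linarith
    have hid : deriv f r = (deriv f r - ((aF r / r : ℝ) : ℂ) * f r)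
        + ((aF r / r : ℝ) : ℂ) * f r := by ring
    have hnd : ‖deriv f r‖ ≤ ‖deriv f r - ((aF r / r : ℝ) : ℂ) * f r‖ + K/r * ‖f r‖ := by
      calc ‖deriv f r‖ = ‖(deriv f r - ((aF r / r : ℝ) : ℂ) * f r)
            + ((aF r / r : ℝ) : ℂ) * f r‖ := by rw [← hid]
        _ ≤ ‖deriv f r - ((aF r / r : ℝ) : ℂ) * f r‖ + ‖((aF r / r : ℝ) : ℂ) * f r‖ :=
            norm_add_le _ _
        _ ≤ _ := by
            have h1 : ‖((aF r / r : ℝ) : ℂ) * f r‖ = |aF r / r| * ‖f r‖ := by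
              rw [norm_mul, Complex.norm_real, Real.norm_eq_abs]
            rw [h1]
            have h2 : |aF r / r| ≤ K / r := by
              rw [abs_div, abs_of_pos hr0]
              gcongr
              exact haF_abs r hr2
            have := mul_le_mul_of_nonneg_right h2 (norm_nonneg (f r))
            linarith
    have hsq : ‖deriv f r‖ ^ 2
        ≤ (‖deriv f r - ((aF r / r : ℝ) : ℂ) * f r‖ + K/r * ‖f r‖) ^ 2 :=
      pow_le_pow_left₀ (norm_nonneg _) hnd 2
    have e1 : (K/r * ‖f r‖)^2 = K^2 * (‖f r‖^2/r^2) := by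
      rw [mul_pow, div_pow]; ring
    have h2 := arith2 (‖deriv f r - ((aF r / r : ℝ) : ℂ) * f r‖) (K/r * ‖f r‖)
      (‖f r‖^2/r^2) K (by positivity) e1
    simp only [hDintdef, hEintdef, hXintdef]
    have h3 : ‖deriv f r‖ ^ 2 ≤ 2 * ‖deriv f r - ((aF r / r : ℝ) : ℂ) * f r‖ ^ 2
        + (2*K^2) * (‖f r‖^2/r^2) := le_trans hsq h2
    calc ‖deriv f r‖ ^ 2 * r ≤ (2 * ‖deriv f r - ((aF r / r : ℝ) : ℂ) * f r‖ ^ 2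
          + (2*K^2) * (‖f r‖^2/r^2)) * r := mul_le_mul_of_nonneg_right h3 (le_of_lt hr0)
      _ = 2 * (‖deriv f r - ((aF r / r : ℝ) : ℂ) * f r‖ ^ 2 * r)
          + (2*K^2) * (‖f r‖^2/r^2 * r) := by ring
  -- nonnegativity
  have hR0 : (0:ℝ) < R := by linarith
  have hEnn : ∀ r : ℝ, 0 < r → 0 ≤ Eint r := by
    intro r hr; simp only [hEintdef]
    exact mul_nonneg (pow_nonneg (norm_nonneg _) 2) hr.le
  have hXnn : ∀ r : ℝ, 0 < r → 0 ≤ Xint r := by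
    intro r hr; simp only [hXintdef]; positivity
  have hDnn : ∀ r : ℝ, 0 < r → 0 ≤ Dint r := by
    intro r hr; simp only [hDintdef]; positivity
  -- measurability
  have h1m : Measurable fun r : ℝ => ((aF r / r : ℝ) : ℂ) :=
    Complex.measurable_ofReal.comp (haFm.div measurable_id)
  have h2m : Measurable fun r : ℝ => deriv f r - ((aF r / r : ℝ) : ℂ) * f r :=
    hf'c.measurable.sub (h1m.mul hfc.measurable)
  have hEm : Measurable Eint := by
    rw [hEintdef]; exact (h2m.norm.pow_const 2).mul measurable_id
  have hXm : Measurable Xint := by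
    rw [hXintdef]
    exact ((hfc.measurable.norm.pow_const 2).div (measurable_id.pow_const 2)).mul measurable_id
  have hDm : Measurable Dint := by
    rw [hDintdef]; exact (hf'c.measurable.norm.pow_const 2).mul measurable_id
  -- integrability
  have hHR : IntegrableOn Hint (Ioi R) := by
    exact hH.mono_set (Ioi_subset_Ioi hR0.le)
  have hE_int : IntegrableOn Eint (Ioi R) := by
    apply Integrable.mono' (hHR.const_mul (2*(1+K^2))) hEm.aestronglyMeasurable
    filter_upwards [ae_restrict_mem measurableSet_Ioi] with r hr
    have hr2 : (2:ℝ) ≤ r := le_of_lt (lt_of_le_of_lt hR hr)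
    rw [Real.norm_eq_abs, abs_of_nonneg (hEnn r (by linarith))]
    exact hEptw r hr2
  have hD_int : IntegrableOn Dint (Ioi R) := by
    apply Integrable.mono' hHR hDm.aestronglyMeasurable
    filter_upwards [ae_restrict_mem measurableSet_Ioi] with r hr
    have hr2 : (2:ℝ) ≤ r := le_of_lt (lt_of_le_of_lt hR hr)
    have hr0 : (0:ℝ) < r := by linarith
    rw [Real.norm_eq_abs, abs_of_nonneg (hDnn r hr0)]
    simp only [hDintdef, hHintdef]
    apply mul_le_mul_of_nonneg_right _ hr0.le
    have : (0:ℝ) ≤ ‖f r‖^2/r^2 := by positivity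
    linarith
  have hX_int : IntegrableOn Xint (Ioi R) := by
    apply Integrable.mono' hHR hXm.aestronglyMeasurable
    filter_upwards [ae_restrict_mem measurableSet_Ioi] with r hr
    have hr2 : (2:ℝ) ≤ r := le_of_lt (lt_of_le_of_lt hR hr)
    have hr0 : (0:ℝ) < r := by linarith
    rw [Real.norm_eq_abs, abs_of_nonneg (hXnn r hr0)]
    simp only [hXintdef, hHintdef]
    apply mul_le_mul_of_nonneg_right _ hr0.le
    have : (0:ℝ) ≤ ‖deriv f r‖^2 := by positivity
    linarith
  -- split the Hardy integral
  have hHsplit : ∫ r in Ioi R, Hint r = (∫ r in Ioi R, Dint r) + ∫ r in Ioi R, Xint r := by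
    have heq : Hint = fun r => Dint r + Xint r := by
      funext r; simp only [hHintdef, hDintdef, hXintdef]; ring
    rw [heq, integral_add hD_int hX_int]
  -- upper bound
  have hupper : (∫ r in Ioi R, Eint r) ≤ (2*(1+K^2)) * ∫ r in Ioi R, Hint r := by
    calc (∫ r in Ioi R, Eint r) ≤ ∫ r in Ioi R, (2*(1+K^2)) * Hint r := by
          apply setIntegral_mono_on hE_int (hHR.const_mul _) measurableSet_Ioi
          intro r hr
          exact hEptw r (le_of_lt (lt_of_le_of_lt hR hr))
      _ = (2*(1+K^2)) * ∫ r in Ioi R, Hint r := integral_const_mul _ _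
  -- derivative of ‖f‖²
  have hnormsq : ∀ z : ℂ, ‖z‖^2 = z.re*z.re + z.im*z.im := by
    intro z
    rw [Complex.sq_norm, Complex.normSq_apply]
  have hNd : ∀ r : ℝ, HasDerivAt (fun s => ‖f s‖^2)
      (2*((f r).re*(deriv f r).re + (f r).im*(deriv f r).im)) r := by
    intro r
    have hre : HasDerivAt (fun s => (f s).re) ((deriv f r).re) r := by
      exact (Complex.reCLM.hasFDerivAt.comp_hasDerivAt r (hfd r))
    have him : HasDerivAt (fun s => (f s).im) ((deriv f r).im) r := by
      exact (Complex.imCLM.hasFDerivAt.comp_hasDerivAt r (hfd r))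
    have h : HasDerivAt (fun s => (f s).re*(f s).re + (f s).im*(f s).im) _ r :=
      (hre.mul hre).add (him.mul him)
    have heq : (fun s => (f s).re*(f s).re + (f s).im*(f s).im)
        = fun s => ‖f s‖^2 := by
      funext s; rw [hnormsq]
    rw [heq] at h
    convert h using 1
    ring
  -- key differential inequality
  have hkey : ∀ r : ℝ, 2 ≤ r →
      2*((f r).re*(deriv f r).re + (f r).im*(deriv f r).im)
        ≤ -(3/2) * Xint r + (2/3) * Eint r := by
    intro r hr2
    have hr0 : (0:ℝ) < r := by linarith
    have haa := haF_ub r hr2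
    have hid : deriv f r = (deriv f r - ((aF r / r : ℝ) : ℂ) * f r)
        + ((aF r / r : ℝ) : ℂ) * f r := by ring
    have hre : (deriv f r).re = (deriv f r - ((aF r / r : ℝ) : ℂ) * f r).re
        + (aF r / r) * (f r).re := by
      conv_lhs => rw [hid]
      simp [Complex.add_re, Complex.mul_re]
    have him : (deriv f r).im = (deriv f r - ((aF r / r : ℝ) : ℂ) * f r).im
        + (aF r / r) * (f r).im := by
      conv_lhs => rw [hid]
      simp [Complex.add_im, Complex.mul_im]
    rw [hre, him]
    simp only [hXintdef, hEintdef]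
    rw [hnormsq (f r), hnormsq (deriv f r - ((aF r / r : ℝ) : ℂ) * f r)]
    exact arith3 _ _ _ _ _ _ hr0 haa
  -- the interval bound
  have hXT : ∀ T : ℝ, R ≤ T →
      (∫ r in R..T, Xint r) ≤ (4/9) * ∫ r in Ioi R, Eint r := by
    intro T hT
    have hXii : IntervalIntegrable Xint volume R T :=
      (intervalIntegrable_iff_integrableOn_Ioc_of_le hT).2 (hX_int.mono_set Ioc_subset_Ioi_self)
    have hEii : IntervalIntegrable Eint volume R T :=
      (intervalIntegrable_iff_integrableOn_Ioc_of_le hT).2 (hE_int.mono_set Ioc_subset_Ioi_self)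
    have hN'c : Continuous fun r : ℝ =>
        2*((f r).re*(deriv f r).re + (f r).im*(deriv f r).im) := by
      apply Continuous.mul continuous_const
      exact ((Complex.continuous_re.comp hfc).mul (Complex.continuous_re.comp hf'c)).add
        ((Complex.continuous_im.comp hfc).mul (Complex.continuous_im.comp hf'c))
    have hN'ii := hN'c.intervalIntegrable (μ := volume) R T
    have hRHSii : IntervalIntegrable (fun r => -(3/2) * Xint r + (2/3) * Eint r) volume R T :=
      (hXii.const_mul _).add (hEii.const_mul _)
    have hFTC : (∫ r in R..T, 2*((f r).re*(deriv f r).re + (f r).im*(deriv f r).im))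
        = ‖f T‖^2 := by
      rw [intervalIntegral.integral_eq_sub_of_hasDerivAt (fun x _ => hNd x) hN'ii, hfR0]
      simp
    have hmono : (∫ r in R..T, 2*((f r).re*(deriv f r).re + (f r).im*(deriv f r).im))
        ≤ ∫ r in R..T, (-(3/2) * Xint r + (2/3) * Eint r) :=
      intervalIntegral.integral_mono_on hT hN'ii hRHSii
        (fun x hx => hkey x (le_trans hR hx.1))
    rw [hFTC, intervalIntegral.integral_add (hXii.const_mul _) (hEii.const_mul _),
      intervalIntegral.integral_const_mul, intervalIntegral.integral_const_mul] at hmono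
    have hfT : 0 ≤ ‖f T‖^2 := by positivity
    have hET : (∫ r in R..T, Eint r) ≤ ∫ r in Ioi R, Eint r := by
      rw [intervalIntegral.integral_of_le hT]
      apply setIntegral_mono_set hE_int
      · filter_upwards [ae_restrict_mem measurableSet_Ioi] with x hx
        exact hEnn x (lt_trans hR0 hx)
      · exact HasSubset.Subset.eventuallyLE Ioc_subset_Ioi_self
    linarith
  -- pass to the limit
  have hXle : (∫ r in Ioi R, Xint r) ≤ (4/9) * ∫ r in Ioi R, Eint r := by
    have hlim := intervalIntegral_tendsto_integral_Ioi R hX_int Filter.tendsto_id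
    apply le_of_tendsto hlim
    filter_upwards [Filter.eventually_ge_atTop R] with T hT
    exact hXT T hT
  -- combine
  have hDle : (∫ r in Ioi R, Dint r)
      ≤ 2 * (∫ r in Ioi R, Eint r) + (2*K^2) * ∫ r in Ioi R, Xint r := by
    calc (∫ r in Ioi R, Dint r)
        ≤ ∫ r in Ioi R, (2 * Eint r + (2*K^2) * Xint r) := by
          apply setIntegral_mono_on hD_int
            ((hE_int.const_mul 2).add (hX_int.const_mul (2*K^2))) measurableSet_Ioi
          intro r hr
          exact hDptw r (le_of_lt (lt_of_le_of_lt hR hr))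
      _ = 2 * (∫ r in Ioi R, Eint r) + (2*K^2) * ∫ r in Ioi R, Xint r := by
          rw [integral_add (hE_int.const_mul 2) (hX_int.const_mul (2*K^2)),
            MeasureTheory.integral_const_mul, MeasureTheory.integral_const_mul]
  have hJnn : 0 ≤ ∫ r in Ioi R, Eint r :=
    setIntegral_nonneg measurableSet_Ioi (fun r hr => hEnn r (lt_trans hR0 hr))
  have hfinal : (∫ r in Ioi R, Hint r) ≤ ((22+8*K^2)/9) * ∫ r in Ioi R, Eint r := by
    have h1 : (2*K^2) * (∫ r in Ioi R, Xint r)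
        ≤ (2*K^2) * ((4/9) * ∫ r in Ioi R, Eint r) :=
      mul_le_mul_of_nonneg_left hXle (by positivity)
    rw [hHsplit]
    linarith [hXle, hDle, h1]
  constructor
  · rw [hJeq]
    have h22 : (0:ℝ) < 22+8*K^2 := by positivity
    have h2 := mul_le_mul_of_nonneg_left hfinal
      (le_of_lt (by positivity : (0:ℝ) < 9/(22+8*K^2)))
    have heq : 9/(22+8*K^2) * (((22+8*K^2)/9) * ∫ r in Ioi R, Eint r)
        = ∫ r in Ioi R, Eint r := by
      field_simp
    linarith
  · rw [hJeq]
    exact hupper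

end NLHardy

/-- Nonlinear Hardy inequality: for `m ≥ 0` and `M > 0` there are `R₀ > 1`, `c, C > 0`
(depending only on `m, M`) such that for every `R ≥ R₀`, every measurable `ε` with
`‖ε‖_{L²} ≤ M`, and every smooth `f` supported in `[R,∞)` with finite Hardy norm,
`2π∫_R^∞ |∂_r f − ((m + A_θ[Q] + A_θ[ε])/r) f|² r dr ∼_{m,M} 2π∫_R^∞ (|∂_r f|² + |f|²/r²) r dr`. -/
theorem nonlinear_hardy (m : ℤ) (hm : 0 ≤ m) (M : ℝ) (hM : 0 < M) :
    ∃ R₀ c C : ℝ, 1 < R₀ ∧ 0 < c ∧ 0 < C ∧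
      ∀ R : ℝ, R₀ ≤ R →
      ∀ ε : ℝ → ℂ, Measurable ε →
        IntegrableOn (fun r => ‖ε r‖ ^ 2 * r) (Set.Ioi (0:ℝ)) → L2w ε ≤ M →
      ∀ f : ℝ → ℂ, ContDiff ℝ (⊤ : ℕ∞) f → (∀ r : ℝ, r < R → f r = 0) →
        IntegrableOn (fun r => (‖deriv f r‖ ^ 2 + ‖f r‖ ^ 2 / r ^ 2) * r) (Set.Ioi (0:ℝ)) →
        c * (2 * Real.pi *
              ∫ r in Set.Ioi R, (‖deriv f r‖ ^ 2 + ‖f r‖ ^ 2 / r ^ 2) * r)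
          ≤ 2 * Real.pi * (∫ r in Set.Ioi R,
              ‖deriv f r - ((((m : ℝ) + Atheta (fun t => ((Qp m t : ℝ) : ℂ)) r
                  + Atheta ε r) / r : ℝ) : ℂ) * f r‖ ^ 2 * r) ∧
        2 * Real.pi * (∫ r in Set.Ioi R,
              ‖deriv f r - ((((m : ℝ) + Atheta (fun t => ((Qp m t : ℝ) : ℂ)) r
                  + Atheta ε r) / r : ℝ) : ℂ) * f r‖ ^ 2 * r)
          ≤ C * (2 * Real.pi *
              ∫ r in Set.Ioi R, (‖deriv f r‖ ^ 2 + ‖f r‖ ^ 2 / r ^ 2) * r) := by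
  obtain ⟨k, rfl⟩ : ∃ k : ℕ, m = (k:ℤ) := ⟨m.toNat, (Int.toNat_of_nonneg hm).symm⟩
  refine ⟨2, 9/(22+8*((k:ℝ) + 2 + M^2/(4*Real.pi))^2),
    2*(1+((k:ℝ) + 2 + M^2/(4*Real.pi))^2), by norm_num,
    by have := Real.pi_pos; positivity, by have := Real.pi_pos; positivity, ?_⟩
  intro R hR ε hεm hε hεL2 f hf hsupp hH
  have hεL2' : Real.sqrt (2 * Real.pi * ∫ r in Set.Ioi (0:ℝ), ‖ε r‖ ^ 2 * r) ≤ M := by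
    simpa only [L2w] using hεL2
  obtain ⟨h1, h2⟩ := NLHardy.main k M hM R hR ε hεm hε hεL2' f hf hsupp hH
  have hπ : (0:ℝ) < Real.pi := Real.pi_pos
  constructor
  · calc 9/(22+8*((k:ℝ) + 2 + M^2/(4*Real.pi))^2) * (2 * Real.pi *
          ∫ r in Set.Ioi R, (‖deriv f r‖ ^ 2 + ‖f r‖ ^ 2 / r ^ 2) * r)
        = 2 * Real.pi * (9/(22+8*((k:ℝ) + 2 + M^2/(4*Real.pi))^2) *
          ∫ r in Set.Ioi R, (‖deriv f r‖ ^ 2 + ‖f r‖ ^ 2 / r ^ 2) * r) := by ring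
      _ ≤ _ := mul_le_mul_of_nonneg_left h1 (by positivity)
  · calc 2 * Real.pi * _ ≤ 2 * Real.pi * (2*(1+((k:ℝ) + 2 + M^2/(4*Real.pi))^2) *
          ∫ r in Set.Ioi R, (‖deriv f r‖ ^ 2 + ‖f r‖ ^ 2 / r ^ 2) * r) :=
        mul_le_mul_of_nonneg_left h2 (by positivity)
      _ = 2*(1+((k:ℝ) + 2 + M^2/(4*Real.pi))^2) * (2 * Real.pi *
          ∫ r in Set.Ioi R, (‖deriv f r‖ ^ 2 + ‖f r‖ ^ 2 / r ^ 2) * r) := by ring
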